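/- Let g ∈ F_q(t)[x₁,…,xₙ] be a polynomial all of whose exponents of t and of each x_i are divisible by p, with some coefficient equal to 1, and suppose ∂g/∂t = c·g for some c ∈ F_q(t). Then c = 0 and g = G^p for some G ∈ F_q(t)[x₁,…,xₙ]. -/

import Mathlib

/-!
Since `D 1 = 0`, the coefficient equal to `1` forces `c = 0`, so every coefficient is a
constant of `D`. For a constant `a / b` in lowest terms, `D` acts on `F_q[t]` as the usual
derivative and `a b' = a' b`; coprimality gives `b ∣ b'`, hence `b' = 0` by degree and then
`a' = 0`. Over the perfect field `F_q` a polynomial with zero derivative is a `p`-th power,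
so each coefficient is one, and with all exponents divisible by `p` the additivity of
Frobenius assembles `g` itself as a `p`-th power.
-/

open Polynomial

theorem Polynomial.exists_eq_pow_of_derivative_eq_zero {R : Type*} [CommSemiring R]
    [NoZeroDivisors R] (p : ℕ) [ExpChar R p] [PerfectRing R p] {f : R[X]}
    (hf : derivative f = 0) : ∃ g, f = g ^ p :=
  ⟨_, (expand_contract' p hf).symm.trans (polynomial_expand_eq R p _)⟩

theorem Polynomial.derivative_eq_zero_of_mul_derivative_eq {R : Type*} [CommRing R] [IsDomain R]
    {a b : R[X]} (hab : IsCoprime a b) (hb : b ≠ 0)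
    (h : a * derivative b = derivative a * b) : derivative a = 0 ∧ derivative b = 0 := by
  have hb' : derivative b = 0 :=
    eq_zero_of_dvd_of_degree_lt (hab.symm.dvd_of_dvd_mul_left (h ▸ dvd_mul_left b _))
      (degree_derivative_lt hb)
  refine ⟨?_, hb'⟩
  rw [hb', mul_zero, eq_comm, mul_eq_zero] at h
  exact h.resolve_right hb

namespace RatFunc

variable {K : Type*} [Field K]

theorem derivation_algebraMap (D : Derivation K (RatFunc K) (RatFunc K)) (hD : D X = 1)
    (f : K[X]) :
    D (algebraMap K[X] (RatFunc K) f) = algebraMap K[X] (RatFunc K) (derivative f) := by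
  have hD' : D.compAlgebraMap K[X] = mkDerivation K (1 : RatFunc K) :=
    derivation_ext (by simp [hD])
  simpa [mkDerivation_apply, Algebra.smul_def] using congr($hD' f)

theorem num_mul_derivative_denom_eq (D : Derivation K (RatFunc K) (RatFunc K)) (hD : D X = 1)
    {f : RatFunc K} (hf : D f = 0) :
    f.num * derivative f.denom = derivative f.num * f.denom := by
  apply algebraMap_injective K
  have hnum : algebraMap K[X] (RatFunc K) f.num = f * algebraMap _ _ f.denom :=
    ((eq_div_iff (algebraMap_ne_zero f.denom_ne_zero)).mp (num_div_denom f).symm).symm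
  have hnum' := congr(D $hnum)
  rw [Derivation.leibniz, hf, smul_zero, add_zero, smul_eq_mul, derivation_algebraMap D hD,
    derivation_algebraMap D hD] at hnum'
  simp only [map_mul]
  linear_combination (algebraMap K[X] (RatFunc K) (derivative f.denom)) * hnum
    - (algebraMap K[X] (RatFunc K) f.denom) * hnum'

theorem exists_eq_pow_of_derivation_eq_zero (p : ℕ) [ExpChar K p] [PerfectRing K p]
    (D : Derivation K (RatFunc K) (RatFunc K)) (hD : D X = 1) {f : RatFunc K} (hf : D f = 0) :
    ∃ h, f = h ^ p := by
  obtain ⟨hnum, hdenom⟩ := derivative_eq_zero_of_mul_derivative_eq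
    (isCoprime_num_denom f) f.denom_ne_zero (num_mul_derivative_denom_eq D hD hf)
  obtain ⟨a, ha⟩ := exists_eq_pow_of_derivative_eq_zero p hnum
  obtain ⟨b, hb⟩ := exists_eq_pow_of_derivative_eq_zero p hdenom
  refine ⟨algebraMap K[X] (RatFunc K) a / algebraMap K[X] (RatFunc K) b, ?_⟩
  rw [div_pow, ← map_pow, ← map_pow, ← ha, ← hb, num_div_denom]

end RatFunc

theorem MvPolynomial.exists_eq_pow_of_coeff_eq_pow {σ R : Type*} [CommSemiring R] (p : ℕ)
    [ExpChar R p] (g : MvPolynomial σ R) (hexp : ∀ m ∈ g.support, ∀ i, p ∣ m i)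
    (hcoeff : ∀ m ∈ g.support, ∃ r, coeff m g = r ^ p) : ∃ G, g = G ^ p := by
  choose! r hr using hcoeff
  refine ⟨∑ m ∈ g.support, monomial (m.mapRange (· / p) (Nat.zero_div p)) (r m), ?_⟩
  rw [sum_pow_char]
  conv_lhs => rw [g.as_sum]
  refine Finset.sum_congr rfl fun m hm => ?_
  rw [monomial_pow, ← hr m hm]
  congr
  ext i
  simp [Nat.mul_div_cancel' (hexp m hm i)]

/-- Let `K = F_q(t)` with `q` a power of the prime `p` and let `∂/∂t` be the `F_q`-linear
derivation of `K` with `∂t/∂t = 1`.  If `g ∈ K[x₁,…,xₙ]` has all exponents of each `xᵢ`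
divisible by `p`, some coefficient of `g` equals `1`, and every coefficient `γ` of `g`
satisfies `∂γ/∂t = c·γ`, then `c = 0` and `g = G^p` for some `G ∈ K[x₁,…,xₙ]`. -/
theorem deriv_proportional_implies_pth_power (p : ℕ) [Fact p.Prime]
    (Fq : Type*) [Field Fq] [Fintype Fq] [CharP Fq p]
    (n : ℕ) (g : MvPolynomial (Fin n) (RatFunc Fq)) (c : RatFunc Fq)
    (D : Derivation Fq (RatFunc Fq) (RatFunc Fq)) (hD : D RatFunc.X = 1)
    (hexp : ∀ m ∈ g.support, ∀ i, p ∣ m i)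
    (hcoeff : ∀ m, D (MvPolynomial.coeff m g) = c * MvPolynomial.coeff m g)
    (hone : ∃ m, MvPolynomial.coeff m g = 1) :
    c = 0 ∧ ∃ G : MvPolynomial (Fin n) (RatFunc Fq), g = G ^ p := by
  obtain ⟨m₀, hm₀⟩ := hone
  have hc : c = 0 := by simpa [hm₀] using (hcoeff m₀).symm
  refine ⟨hc, g.exists_eq_pow_of_coeff_eq_pow p hexp fun m _ => ?_⟩
  exact RatFunc.exists_eq_pow_of_derivation_eq_zero p D hD (by rw [hcoeff, hc, zero_mul])
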